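/- arXiv:2208.01727 — 2 statements merged into one kernel-verified Lean document; each statement's English description precedes it below -/
import Mathlib

section
/- Assume the semigroup possesses a compact (𝔹,Σ)-attracting set K ⊆ Φ. Then for every B ∈ 𝔹 the ω-limit set ω(B) attracts B: for every ε > 0 there exists D > 0 such that S(h)B is contained in the open ε-neighbourhood of ω(B) for every h ∈ Σ with dist(h, frontier Σ) ≥ D. -/
open Metric Filter Topology

noncomputable section

/-- The ω-limit set of a set `B` under the multi-parametric semigroup `S`
with time arrow `Sig`. -/
def omegaSet {m : ℕ} {Φ : Type*} [MetricSpace Φ]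
    (S : EuclideanSpace ℝ (Fin m) → Φ → Φ) (Sig : Set (EuclideanSpace ℝ (Fin m)))
    (B : Set Φ) : Set Φ :=
  {u₀ | ∃ (h : ℕ → EuclideanSpace ℝ (Fin m)) (u : ℕ → Φ),
    (∀ n, h n ∈ Sig) ∧
    Tendsto (fun n => infDist (h n) (frontier Sig)) atTop atTop ∧
    (∀ n, u n ∈ B) ∧
    Tendsto (fun n => S (h n) (u n)) atTop (𝓝 u₀)}

/-- `K` is a `(𝔹,Σ)`-attracting set for the semigroup `S`. -/
def IsAttractingSet {m : ℕ} {Φ : Type*} [MetricSpace Φ]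
    (S : EuclideanSpace ℝ (Fin m) → Φ → Φ) (Sig : Set (EuclideanSpace ℝ (Fin m)))
    (Bor : Set (Set Φ)) (K : Set Φ) : Prop :=
  ∀ B ∈ Bor, ∀ ε : ℝ, 0 < ε → ∃ D : ℝ, 0 < D ∧
    ∀ h ∈ Sig, infDist h (frontier Sig) ≥ D → S h '' B ⊆ thickening ε K

/-! If `ω(B)` did not attract `B`, there would be times `hₙ` with `dist(hₙ, ∂Σ) → ∞` and points
`uₙ ∈ B` such that `S(hₙ)uₙ` stays `ε` away from `ω(B)`. Since `K` attracts `B`, the sequence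
`S(hₙ)uₙ` tends to the compact set `K`, so it has a cluster point `u₀ ∈ K`; a subsequence converging
to `u₀` exhibits `u₀ ∈ ω(B)`, a contradiction. -/

theorem IsCompact.exists_mapClusterPt_of_tendsto_nhdsSet {X ι : Type*} [TopologicalSpace X]
    {K : Set X} {l : Filter ι} [l.NeBot] {f : ι → X} (hK : IsCompact K)
    (hf : Tendsto f l (𝓝ˢ K)) : ∃ x ∈ K, MapClusterPt x l f := by
  by_contra! hnone
  have hdisj : Disjoint (𝓝ˢ K) (map f l) :=
    hK.disjoint_nhdsSet_left.2 fun x hx => by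
      simpa only [mapClusterPt_def, clusterPt_iff_not_disjoint, not_not] using hnone x hx
  exact (map_neBot (m := f) (f := l)).ne (hdisj.mono_left hf).eq_bot_of_self

section

variable {m : ℕ} {Φ : Type*} [MetricSpace Φ] {S : EuclideanSpace ℝ (Fin m) → Φ → Φ}
  {Sig : Set (EuclideanSpace ℝ (Fin m))} {Bor : Set (Set Φ)} {K B : Set Φ}

theorem IsAttractingSet.tendsto_nhdsSet {ι : Type*} {l : Filter ι}
    (hKattr : IsAttractingSet S Sig Bor K) (hK : IsCompact K) (hB : B ∈ Bor)
    {h : ι → EuclideanSpace ℝ (Fin m)} {u : ι → Φ} (hSig : ∀ i, h i ∈ Sig)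
    (hfar : Tendsto (fun i => infDist (h i) (frontier Sig)) l atTop) (hu : ∀ i, u i ∈ B) :
    Tendsto (fun i => S (h i) (u i)) l (𝓝ˢ K) := by
  refine (hasBasis_nhdsSet_thickening hK).tendsto_right_iff.2 fun ε hε => ?_
  obtain ⟨D, -, hD⟩ := hKattr B hB ε hε
  filter_upwards [hfar.eventually_ge_atTop D] with i hi
  exact hD (h i) (hSig i) hi ⟨u i, hu i, rfl⟩

theorem mem_omegaSet_of_mapClusterPt {h : ℕ → EuclideanSpace ℝ (Fin m)} {u : ℕ → Φ} {u₀ : Φ}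
    (hSig : ∀ n, h n ∈ Sig) (hfar : Tendsto (fun n => infDist (h n) (frontier Sig)) atTop atTop)
    (hu : ∀ n, u n ∈ B) (hclust : MapClusterPt u₀ atTop fun n => S (h n) (u n)) :
    u₀ ∈ omegaSet S Sig B := by
  obtain ⟨φ, hφ, hlim⟩ := hclust.tendsto_subseq
  exact ⟨h ∘ φ, u ∘ φ, fun n => hSig (φ n), hfar.comp hφ.tendsto_atTop, fun n => hu (φ n), hlim⟩

end

theorem omegaSet_attracts_general
    {m : ℕ} {Φ : Type*} [MetricSpace Φ]
    (Sig : Set (EuclideanSpace ℝ (Fin m)))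
    (S : EuclideanSpace ℝ (Fin m) → Φ → Φ) (Bor : Set (Set Φ))
    (K : Set Φ) (hK : IsCompact K) (hKattr : IsAttractingSet S Sig Bor K)
    (B : Set Φ) (hB : B ∈ Bor) :
    ∀ ε : ℝ, 0 < ε → ∃ D : ℝ, 0 < D ∧
      ∀ h ∈ Sig, infDist h (frontier Sig) ≥ D →
        S h '' B ⊆ thickening ε (omegaSet S Sig B) := by
  intro ε hε
  by_contra! hfails
  have hbad : ∀ n : ℕ, ∃ h ∈ Sig, infDist h (frontier Sig) ≥ n + 1 ∧
      ∃ u ∈ B, S h u ∉ thickening ε (omegaSet S Sig B) := fun n => by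
    obtain ⟨h, hSig, hfar, hnot⟩ := hfails (n + 1) n.cast_add_one_pos
    obtain ⟨-, ⟨u, hu, rfl⟩, hout⟩ := Set.not_subset.1 hnot
    exact ⟨h, hSig, hfar, u, hu, hout⟩
  choose h hSig hfar u hu hout using hbad
  replace hfar : Tendsto (fun n => infDist (h n) (frontier Sig)) atTop atTop :=
    tendsto_atTop_mono hfar (tendsto_atTop_add_const_right _ 1 tendsto_natCast_atTop_atTop)
  obtain ⟨u₀, -, hclust⟩ := hK.exists_mapClusterPt_of_tendsto_nhdsSet
    (hKattr.tendsto_nhdsSet hK hB hSig hfar hu)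
  have hu₀ : u₀ ∈ omegaSet S Sig B := mem_omegaSet_of_mapClusterPt hSig hfar hu hclust
  obtain ⟨n, hn⟩ := (hclust.frequently
    (isOpen_thickening.mem_nhds (self_subset_thickening hε _ hu₀))).exists
  exact hout n hn

/-- If the semigroup possesses a compact `(𝔹,Σ)`-attracting set `K`, then for every
`B ∈ 𝔹` the ω-limit set `ω(B)` attracts `B`. -/
theorem omegaSet_attracts
    {m : ℕ} {Φ : Type*} [MetricSpace Φ] (hm : 1 ≤ m)
    (C Sig : Set (EuclideanSpace ℝ (Fin m)))
    (S : EuclideanSpace ℝ (Fin m) → Φ → Φ) (Bor : Set (Set Φ))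
    (hCclosed : IsClosed C) (hCint : (interior C).Nonempty)
    (hC0 : (0 : EuclideanSpace ℝ (Fin m)) ∈ C)
    (hCadd : ∀ h₁ ∈ C, ∀ h₂ ∈ C, h₁ + h₂ ∈ C)
    (hCcone : ∀ t : ℝ, 0 ≤ t → ∀ h ∈ C, t • h ∈ C)
    (hS0 : S 0 = id)
    (hSadd : ∀ h₁ ∈ C, ∀ h₂ ∈ C, S (h₁ + h₂) = S h₁ ∘ S h₂)
    (hSigne : Sig.Nonempty) (hSigC : Sig ⊆ C)
    (hfr : frontier C ⊆ frontier Sig)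
    (hcof : ∀ D : ℝ, 0 < D → ∃ h ∈ Sig, infDist h (frontier Sig) ≥ D)
    (K : Set Φ) (hK : IsCompact K) (hKattr : IsAttractingSet S Sig Bor K)
    (B : Set Φ) (hB : B ∈ Bor) :
    ∀ ε : ℝ, 0 < ε → ∃ D : ℝ, 0 < D ∧
      ∀ h ∈ Sig, infDist h (frontier Sig) ≥ D →
        S h '' B ⊆ thickening ε (omegaSet S Sig B) :=
  omegaSet_attracts_general Sig S Bor K hK hKattr B hB
end
end

section
/- Let 𝒞 ⊆ ℝ^m be a closed set and let (hₙ) be a sequence of points of 𝒞 such that dist(hₙ, frontier 𝒞) → ∞ as n → ∞. Then ⋃ₙ (−hₙ + 𝒞) = ℝ^m; equivalently, for every s ∈ ℝ^m there exists n with hₙ + s ∈ 𝒞. -/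
/-! A ball that meets `C` and misses `frontier C` is connected, hence lies in `C`. So `C` contains the
ball of radius `infDist (h n) (frontier C)` about `h n`, and these radii eventually exceed `‖s‖`. -/

open Metric Filter Topology

theorem IsPreconnected.subset_of_disjoint_frontier {X : Type*} [TopologicalSpace X]
    {s C : Set X} (hs : IsPreconnected s) (hsC : (s ∩ C).Nonempty)
    (hfr : Disjoint s (frontier C)) : s ⊆ C := by
  have hcover : s ⊆ interior C ∪ interior Cᶜ :=
    (compl_frontier_eq_union_interior (s := C)) ▸ hfr.subset_compl_right
  have hdisj : Disjoint (interior C) (interior Cᶜ) :=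
    (disjoint_compl_right (a := C)).mono interior_subset interior_subset
  obtain ⟨y, hys, hyC⟩ := hsC
  have hyint : y ∈ interior C := self_sdiff_frontier C ▸ ⟨hyC, hfr.notMem_of_mem_left hys⟩
  exact (hs.subset_left_of_subset_union isOpen_interior isOpen_interior hdisj hcover
    ⟨y, hys, hyint⟩).trans interior_subset

theorem Metric.ball_infDist_frontier_subset {E : Type*} [NormedAddCommGroup E] [NormedSpace ℝ E]
    {C : Set E} {x : E} (hx : x ∈ C) : ball x (infDist x (frontier C)) ⊆ C := by
  rcases le_or_gt (infDist x (frontier C)) 0 with hr | hr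
  · simp [ball_eq_empty.2 hr]
  exact isPreconnected_ball.subset_of_disjoint_frontier ⟨x, mem_ball_self hr, hx⟩
    disjoint_ball_infDist

theorem iUnion_neg_add_eq_univ_of_infDist_frontier_tendsto_atTop_general
    {m : ℕ} (C : Set (EuclideanSpace ℝ (Fin m)))
    (h : ℕ → EuclideanSpace ℝ (Fin m)) (hmem : ∀ n, h n ∈ C)
    (hdist : Tendsto (fun n => infDist (h n) (frontier C)) atTop atTop) :
    (⋃ n, (fun x => x - h n) '' C) = Set.univ ∧
    ∀ s : EuclideanSpace ℝ (Fin m), ∃ n, h n + s ∈ C := by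
  have hcover (s : EuclideanSpace ℝ (Fin m)) : ∃ n, h n + s ∈ C := by
    obtain ⟨n, hn⟩ := (hdist.eventually_gt_atTop ‖s‖).exists
    refine ⟨n, ball_infDist_frontier_subset (hmem n) ?_⟩
    rwa [mem_ball_iff_norm, add_sub_cancel_left]
  refine ⟨Set.eq_univ_of_forall fun s => ?_, hcover⟩
  obtain ⟨n, hn⟩ := hcover s
  exact Set.mem_iUnion.2 ⟨n, h n + s, hn, add_sub_cancel_left _ _⟩

/-- If `𝒞 ⊆ ℝ^m` is closed and `hₙ ∈ 𝒞` with `dist(hₙ, frontier 𝒞) → ∞`, then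
`⋃ₙ (−hₙ + 𝒞) = ℝ^m`; equivalently every `s` satisfies `hₙ + s ∈ 𝒞` for some `n`. -/
theorem iUnion_neg_add_eq_univ_of_infDist_frontier_tendsto_atTop
    {m : ℕ} (C : Set (EuclideanSpace ℝ (Fin m))) (hCclosed : IsClosed C)
    (h : ℕ → EuclideanSpace ℝ (Fin m)) (hmem : ∀ n, h n ∈ C)
    (hdist : Tendsto (fun n => infDist (h n) (frontier C)) atTop atTop) :
    (⋃ n, (fun x => x - h n) '' C) = Set.univ ∧
    ∀ s : EuclideanSpace ℝ (Fin m), ∃ n, h n + s ∈ C :=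
  iUnion_neg_add_eq_univ_of_infDist_frontier_tendsto_atTop_general C h hmem hdist
end
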